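/- arXiv:2011.04995 — 2 statements merged into one kernel-verified Lean document; each statement's English description precedes it below -/
import Mathlib

section
/- Let Π be a rectangular diagram of a surface and Π' the result of a vertical bubble creation move applied to Π. Then the associated movie diagrams coincide: Ψ_{Π'} = Ψ_Π. -/
noncomputable section

/-- The circle `S¹ = ℝ/ℤ`. -/
abbrev S1 := AddCircle (1 : ℝ)

namespace RectDiag

instance : Fact ((0:ℝ) < 1) := ⟨one_pos⟩

/-- The length of the (positively oriented) arc from `x` to `y`, normalized in `[0,1)`. -/
def arcLen (x y : S1) : ℝ := (AddCircle.equivIco 1 0 (y - x) : ℝ)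

/-- The closed arc `[x;y]` from `x` to `y` with respect to the standard orientation. -/
def closedArc (x y : S1) : Set S1 :=
  {z | ∃ t : ℝ, 0 ≤ t ∧ t ≤ arcLen x y ∧ z = x + (t : S1)}

/-- The open arc `(x;y)`. -/
def openArc (x y : S1) : Set S1 :=
  {z | ∃ t : ℝ, 0 < t ∧ t < arcLen x y ∧ z = x + (t : S1)}

/-- The half-open arc `(x;y]`. -/
def arcIoc (x y : S1) : Set S1 :=
  {z | ∃ t : ℝ, 0 < t ∧ t ≤ arcLen x y ∧ z = x + (t : S1)}

/-- A rectangle `[θ1;θ2] × [φ1;φ2]` in the torus `T² = S¹ × S¹`. -/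
structure Rect where
  θ1 : S1
  θ2 : S1
  φ1 : S1
  φ2 : S1
  hθ : θ1 ≠ θ2
  hφ : φ1 ≠ φ2

/-- The underlying subset of the torus. -/
def Rect.toSet (r : Rect) : Set (S1 × S1) := closedArc r.θ1 r.θ2 ×ˢ closedArc r.φ1 r.φ2

/-- The vertex set `V(r) = {θ1,θ2} × {φ1,φ2}`. -/
def Rect.V (r : Rect) : Set (S1 × S1) := ({r.θ1, r.θ2} : Set S1) ×ˢ ({r.φ1, r.φ2} : Set S1)

/-- Two rectangles are compatible if their intersection is empty, or consists of
common vertices, or is a rectangle disjoint from the vertices of both. -/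
def Compatible (r1 r2 : Rect) : Prop :=
  r1.toSet ∩ r2.toSet = ∅ ∨
  (r1.toSet ∩ r2.toSet ⊆ r1.V ∧ r1.toSet ∩ r2.toSet ⊆ r2.V) ∨
  (∃ r : Rect, r1.toSet ∩ r2.toSet = r.toSet ∧ Disjoint r.toSet (r1.V ∪ r2.V))

/-- `v` is a free vertex of the collection `Rs` of rectangles:
it is a vertex of exactly one rectangle of `Rs`. -/
def FreeVertexOf (Rs : Set Rect) (v : S1 × S1) : Prop := ∃! r, r ∈ Rs ∧ v ∈ r.V

/-- A rectangular diagram of a surface. -/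
structure RectDiagram where
  rects : Set Rect
  finite : rects.Finite
  compat : ∀ r1 ∈ rects, ∀ r2 ∈ rects, r1 ≠ r2 → Compatible r1 r2
  free_meridian : ∀ θ : S1, ∃ a b : S1 × S1,
    {v | FreeVertexOf rects v ∧ v.1 = θ} ⊆ {a, b}
  free_longitude : ∀ φ : S1, ∃ a b : S1 × S1,
    {v | FreeVertexOf rects v ∧ v.2 = φ} ⊆ {a, b}

/-- The boundary `∂Π`: the set of free vertices. -/
def RectDiagram.boundary (P : RectDiagram) : Set (S1 × S1) := {v | FreeVertexOf P.rects v}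

/-- The set of all vertices of the diagram. -/
def RectDiagram.vertexSet (P : RectDiagram) : Set (S1 × S1) := ⋃ r ∈ P.rects, r.V

/-- The meridian `m_θ` is an occupied level of `P`. -/
def OccupiedMeridian (P : RectDiagram) (θ : S1) : Prop := ∃ v ∈ P.vertexSet, v.1 = θ

/-- Two chords of `S¹` do not cross. -/
def ChordsNoncross (c c' : Set S1) : Prop :=
  ∀ a b : S1, c = {a, b} → c' ⊆ openArc a b ∨ c' ⊆ openArc b a

/-- A non-crossing chord diagram: a finite set of chords (unordered pairs of distinct
points of `S¹`) that pairwise do not cross. -/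
def IsNCD (C : Set (Set S1)) : Prop :=
  C.Finite ∧ (∀ c ∈ C, ∃ a b : S1, a ≠ b ∧ c = {a, b}) ∧
  ∀ c ∈ C, ∀ c' ∈ C, c ≠ c' → ChordsNoncross c c'

/-- Any chord between two points of `R` can be added to `C` keeping it non-crossing. -/
def Extendable (C : Set (Set S1)) (R : Set S1) : Prop :=
  ∀ a ∈ R, ∀ b ∈ R, a ≠ b → IsNCD (insert ({a, b} : Set S1) C)

/-- A region of a non-crossing chord diagram `C`: a maximal subset `R ⊆ S¹` such that
any chord joining two distinct points of `R` can be added to `C` keeping it non-crossing. -/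
def IsRegion (C : Set (Set S1)) (R : Set S1) : Prop :=
  Extendable C R ∧ ∀ R', Extendable C R' → R ⊆ R' → R' = R

/-- Two regions are neighboring: distinct, their boundaries share exactly two points,
and these two points form a chord of `C`. -/
def Neighboring (C : Set (Set S1)) (R R' : Set S1) : Prop :=
  IsRegion C R ∧ IsRegion C R' ∧ R ≠ R' ∧
  ∃ a b : S1, a ≠ b ∧ frontier R ∩ frontier R' = {a, b} ∧ ({a, b} : Set S1) ∈ C

/-- The points `φ 0, …, φ (k-1)` follow on `S¹` in this circular order. -/
def CircOrd (k : ℕ) (φ : ℕ → S1) : Prop :=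
  ∃ t : ℕ → ℝ, (∀ i j : ℕ, i < j → j < k → t i < t j) ∧
    (∀ i : ℕ, i < k → t i < t 0 + 1) ∧
    ∀ i : ℕ, i < k → φ i = ((t i : ℝ) : S1)

/-- The chords `{φ1,φ2},{φ3,φ4},…,{φ_{k-1},φ_k}` (for `k` even; `0`-based indices). -/
def pairsRemovedEven (k : ℕ) (φ : ℕ → S1) : Set (Set S1) :=
  {c | ∃ i : ℕ, 2*i+1 < k ∧ c = ({φ (2*i), φ (2*i+1)} : Set S1)}

/-- The chords `{φ1,φ2},{φ3,φ4},…,{φ_{k-2},φ_{k-1}}` (for `k` odd). -/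
def pairsRemovedOdd (k : ℕ) (φ : ℕ → S1) : Set (Set S1) :=
  {c | ∃ i : ℕ, 2*i+2 < k ∧ c = ({φ (2*i), φ (2*i+1)} : Set S1)}

/-- The chords `{φ2,φ3},{φ4,φ5},…` added by an event. -/
def pairsAdded (k : ℕ) (φ : ℕ → S1) : Set (Set S1) :=
  {c | ∃ i : ℕ, 2*i+2 < k ∧ c = ({φ (2*i+1), φ (2*i+2)} : Set S1)}

/-- The wrap-around chord `{φ_k, φ1}`. -/
def wrapChord (k : ℕ) (φ : ℕ → S1) : Set S1 := {φ (k-1), φ 0}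

/-- The admissible event (in the forward direction) determined by the circularly
ordered points `φ 0, …, φ (k-1)`, of one of the three types. -/
def EventFwd (k : ℕ) (φ : ℕ → S1) (C1 C2 : Set (Set S1)) : Prop :=
  2 ≤ k ∧ CircOrd k φ ∧
  ((Even k ∧ pairsRemovedEven k φ ⊆ C1 ∧
      C2 = (C1 \ pairsRemovedEven k φ) ∪ pairsAdded k φ) ∨
   (Odd k ∧ pairsRemovedOdd k φ ⊆ C1 ∧
      C2 = (C1 \ pairsRemovedOdd k φ) ∪ pairsAdded k φ) ∨
   (Even k ∧ 4 ≤ k ∧ pairsRemovedEven k φ ⊆ C1 ∧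
      C2 = (C1 \ pairsRemovedEven k φ) ∪ (pairsAdded k φ ∪ {wrapChord k φ})))

/-- `C1 ↦ C2` is an admissible event with involved points `φ 0, …, φ (k-1)`
(one of the diagrams, whichever of the two, is obtained from the other). -/
def AdmissibleEventVia (k : ℕ) (φ : ℕ → S1) (C1 C2 : Set (Set S1)) : Prop :=
  EventFwd k φ C1 C2 ∨ EventFwd k φ C2 C1

/-- `C1 ↦ C2` is an admissible event of non-crossing chord diagrams. -/
def AdmissibleEvent (C1 C2 : Set (Set S1)) : Prop :=
  IsNCD C1 ∧ IsNCD C2 ∧ ∃ (k : ℕ) (φ : ℕ → S1), AdmissibleEventVia k φ C1 C2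

/-- The chords of the movie of `P` visible at the meridian `m_{θ0}` (for `θ0` in the
open `θ`-interval of a rectangle of `P`). -/
def movieAt (P : RectDiagram) (θ0 : S1) : Set (Set S1) :=
  {c | ∃ r ∈ P.rects, θ0 ∈ openArc r.θ1 r.θ2 ∧ c = ({r.φ1, r.φ2} : Set S1)}

/-- The movie diagram `Ψ_P` associated with `P`: the left continuous extension of
`movieAt`. -/
def moviePsi (P : RectDiagram) (θ0 : S1) : Set (Set S1) :=
  {c | ∃ ε > (0:ℝ), ∀ t : ℝ, 0 < t → t < ε → c ∈ movieAt P (θ0 - (t : S1))}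

/-- The right limit `Ψ_P(θ0+0)`. -/
def moviePsiRight (P : RectDiagram) (θ0 : S1) : Set (Set S1) :=
  {c | ∃ ε > (0:ℝ), ∀ t : ℝ, 0 < t → t < ε → c ∈ movieAt P (θ0 + (t : S1))}

/-- A vertical bubble creation move `P ↦ P'` replacing `r = [θ1;θ2]×[φ1;φ2] ∈ P` by
`r1 = [θ1;θ3]×[φ1;φ2]`, `r2 = [θ3;θ4]×[φ2;φ1]`, `r3 = [θ4;θ2]×[φ1;φ2]`. -/
def IsBubbleMove (P P' : RectDiagram) (r r1 r2 r3 : Rect) (θ3 θ4 : S1) : Prop :=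
  r ∈ P.rects ∧
  θ3 ∈ openArc r.θ1 r.θ2 ∧ θ4 ∈ openArc θ3 r.θ2 ∧
  (∀ θ ∈ closedArc θ3 θ4, ¬ OccupiedMeridian P θ) ∧
  (∀ r' ∈ P.rects, ¬ (closedArc θ3 θ4 ×ˢ closedArc r.φ1 r.φ2 ⊆ interior r'.toSet)) ∧
  (r1.θ1 = r.θ1 ∧ r1.θ2 = θ3 ∧ r1.φ1 = r.φ1 ∧ r1.φ2 = r.φ2) ∧
  (r2.θ1 = θ3 ∧ r2.θ2 = θ4 ∧ r2.φ1 = r.φ2 ∧ r2.φ2 = r.φ1) ∧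
  (r3.θ1 = θ4 ∧ r3.θ2 = r.θ2 ∧ r3.φ1 = r.φ1 ∧ r3.φ2 = r.φ2) ∧
  P'.rects = (P.rects \ {r}) ∪ {r1, r2, r3}


/-! ### Auxiliary lemmas -/

lemma arcLen_mem (x y : S1) : arcLen x y ∈ Set.Ico (0:ℝ) 1 := by
  have := (AddCircle.equivIco 1 0 (y - x)).2; simpa [arcLen] using this

lemma coe_arcLen (x y : S1) : ((arcLen x y : ℝ) : S1) = y - x :=
  (AddCircle.equivIco 1 0).symm_apply_apply _

lemma coe_inj {s t : ℝ} (hs : s ∈ Set.Ico (0:ℝ) 1) (ht : t ∈ Set.Ico (0:ℝ) 1)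
    (h : (s : S1) = t) : s = t := by
  rwa [AddCircle.coe_eq_coe_iff_of_mem_Ico (a := 0) (by simpa using hs) (by simpa using ht)] at h

lemma arcLen_eq {x y : S1} {t : ℝ} (h0 : 0 ≤ t) (h1 : t < 1) (hy : y = x + (t : S1)) :
    arcLen x y = t := by
  refine coe_inj (arcLen_mem x y) ⟨h0, h1⟩ ?_
  rw [coe_arcLen, hy]; abel

lemma arcLen_pos {x y : S1} (h : x ≠ y) : 0 < arcLen x y := by
  rcases lt_or_eq_of_le (arcLen_mem x y).1 with h' | h'
  · exact h'
  · exfalso; apply h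
    have hc := coe_arcLen x y
    rw [← h'] at hc
    have : y - x = 0 := by rw [← hc]; norm_cast
    exact (sub_eq_zero.mp this).symm

lemma arcLen_self (x : S1) : arcLen x x = 0 :=
  arcLen_eq le_rfl one_pos (by norm_cast; simp)

lemma coe_real_add (a b : ℝ) : ((a + b : ℝ) : S1) = (a : S1) + (b : S1) := rfl

/-- Parametrization of the bubble configuration. -/
lemma bubble_params {θ1 θ2 θ3 θ4 : S1} (h3 : θ3 ∈ openArc θ1 θ2) (h4 : θ4 ∈ openArc θ3 θ2) :
    ∃ a b : ℝ, 0 < a ∧ 0 < b ∧ a + b < arcLen θ1 θ2 ∧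
      θ3 = θ1 + (a : S1) ∧ θ4 = θ1 + ((a + b : ℝ) : S1) ∧
      arcLen θ1 θ3 = a ∧ arcLen θ3 θ4 = b ∧
      arcLen θ4 θ2 = arcLen θ1 θ2 - (a + b) := by
  obtain ⟨a, ha0, haL, e3⟩ := h3
  have hL1 : arcLen θ1 θ2 < 1 := (arcLen_mem θ1 θ2).2
  have h2eq : θ2 = θ1 + ((arcLen θ1 θ2 : ℝ) : S1) := by rw [coe_arcLen]; abel
  have L32 : arcLen θ3 θ2 = arcLen θ1 θ2 - a := by
    refine arcLen_eq (by linarith) (by linarith) ?_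
    have hkey : ((arcLen θ1 θ2 - a : ℝ) : S1) = (θ2 - θ1) - (a : S1) := by
      rw [show (arcLen θ1 θ2 - a : ℝ) = arcLen θ1 θ2 + (-a) by ring, coe_real_add,
        coe_arcLen]
      norm_cast
    rw [hkey, e3]; abel
  obtain ⟨b, hb0, hbL, e4⟩ := h4
  rw [L32] at hbL
  refine ⟨a, b, ha0, hb0, by linarith, e3, ?_, ?_, ?_, ?_⟩
  · rw [e4, e3, coe_real_add]; abel
  · exact arcLen_eq (le_of_lt ha0) (by linarith) e3
  · exact arcLen_eq (le_of_lt hb0) (by linarith) e4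
  · refine arcLen_eq (by linarith) (by linarith) ?_
    have hkey : ((arcLen θ1 θ2 - (a + b) : ℝ) : S1)
        = (θ2 - θ1) - (a : S1) - (b : S1) := by
      rw [show (arcLen θ1 θ2 - (a + b) : ℝ) = arcLen θ1 θ2 + (-a) + (-b) by ring,
        coe_real_add, coe_real_add, coe_arcLen]
      norm_cast
    rw [hkey, e4, e3]; abel

lemma openArc_subL {θ1 θ2 θ3 θ4 : S1} (h3 : θ3 ∈ openArc θ1 θ2) (h4 : θ4 ∈ openArc θ3 θ2) :
    openArc θ1 θ3 ⊆ openArc θ1 θ2 := by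
  obtain ⟨a, b, ha0, hb0, hab, e3, e4, La, Lb, Lc⟩ := bubble_params h3 h4
  rintro z ⟨t, ht0, htL, rfl⟩
  rw [La] at htL
  exact ⟨t, ht0, by linarith, rfl⟩

lemma openArc_subM {θ1 θ2 θ3 θ4 : S1} (h3 : θ3 ∈ openArc θ1 θ2) (h4 : θ4 ∈ openArc θ3 θ2) :
    openArc θ3 θ4 ⊆ openArc θ1 θ2 := by
  obtain ⟨a, b, ha0, hb0, hab, e3, e4, La, Lb, Lc⟩ := bubble_params h3 h4
  rintro z ⟨t, ht0, htL, rfl⟩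
  rw [Lb] at htL
  exact ⟨a + t, by linarith, by linarith, by rw [e3]; simp only [coe_real_add]; abel⟩

lemma openArc_subR {θ1 θ2 θ3 θ4 : S1} (h3 : θ3 ∈ openArc θ1 θ2) (h4 : θ4 ∈ openArc θ3 θ2) :
    openArc θ4 θ2 ⊆ openArc θ1 θ2 := by
  obtain ⟨a, b, ha0, hb0, hab, e3, e4, La, Lb, Lc⟩ := bubble_params h3 h4
  rintro z ⟨t, ht0, htL, rfl⟩
  rw [Lc] at htL
  exact ⟨a + b + t, by linarith, by linarith, by
    rw [e4]; simp only [coe_real_add]; abel⟩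

lemma openArc_split {θ1 θ2 θ3 θ4 : S1} (h3 : θ3 ∈ openArc θ1 θ2) (h4 : θ4 ∈ openArc θ3 θ2)
    {θ : S1} (hθ : θ ∈ openArc θ1 θ2) (n3 : θ ≠ θ3) (n4 : θ ≠ θ4) :
    θ ∈ openArc θ1 θ3 ∨ θ ∈ openArc θ3 θ4 ∨ θ ∈ openArc θ4 θ2 := by
  obtain ⟨a, b, ha0, hb0, hab, e3, e4, La, Lb, Lc⟩ := bubble_params h3 h4
  obtain ⟨t, ht0, htL, rfl⟩ := hθ
  have hta : t ≠ a := fun h => n3 (by rw [h, e3])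
  have htab : t ≠ a + b := fun h => n4 (by rw [h, e4])
  rcases lt_trichotomy t a with h | h | h
  · exact Or.inl ⟨t, ht0, by rw [La]; exact h, rfl⟩
  · exact absurd h hta
  rcases lt_trichotomy t (a + b) with h' | h' | h'
  · refine Or.inr (Or.inl ⟨t - a, by linarith, by rw [Lb]; linarith, ?_⟩)
    rw [e3, show (t : S1) = (a : S1) + ((t - a : ℝ) : S1) by rw [← coe_real_add]; ring_nf]
    abel
  · exact absurd h' htab
  · refine Or.inr (Or.inr ⟨t - (a + b), by linarith, by rw [Lc]; linarith, ?_⟩)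
    rw [e4, show (t : S1) = ((a + b : ℝ) : S1) + ((t - (a + b) : ℝ) : S1) by
      rw [← coe_real_add]; ring_nf]
    abel

/-- Values of a point moving left along the circle avoid a given point `s` for
small enough times. -/
lemma sub_ne_of_lt {θ0 s : S1} {t : ℝ} (ht0 : 0 < t) (ht1 : t < 1)
    (h : θ0 = s ∨ t < arcLen s θ0) : θ0 - (t : S1) ≠ s := by
  intro heq
  have hts : (t : S1) = θ0 - s := by rw [← heq]; abel
  have : t = arcLen s θ0 := by
    refine coe_inj ⟨le_of_lt ht0, ht1⟩ (arcLen_mem s θ0) ?_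
    rw [hts, coe_arcLen]
  rcases h with h | h
  · rw [h, arcLen_self] at this; linarith
  · linarith

open Classical in
/-- Left limits are insensitive to the values at two exceptional points. -/
lemma moviePsi_subset_of (Q Q' : RectDiagram) (s3 s4 : S1)
    (h : ∀ θ : S1, θ ≠ s3 → θ ≠ s4 → movieAt Q θ = movieAt Q' θ) (θ0 : S1) :
    moviePsi Q θ0 ⊆ moviePsi Q' θ0 := by
  rintro c ⟨ε, hε, hc⟩
  set d3 : ℝ := if θ0 = s3 then 1 else arcLen s3 θ0 with hd3
  set d4 : ℝ := if θ0 = s4 then 1 else arcLen s4 θ0 with hd4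
  have hd3pos : 0 < d3 := by
    rw [hd3]; split_ifs with h'
    · exact one_pos
    · exact arcLen_pos (fun he => h' he.symm)
  have hd4pos : 0 < d4 := by
    rw [hd4]; split_ifs with h'
    · exact one_pos
    · exact arcLen_pos (fun he => h' he.symm)
  refine ⟨min ε (min 1 (min d3 d4)), by positivity, fun t ht0 htε => ?_⟩
  have ht1 : t < 1 := lt_of_lt_of_le htε (le_trans (min_le_right _ _) (min_le_left _ _))
  have htd3 : t < d3 := lt_of_lt_of_le htε
    (le_trans (min_le_right _ _) (le_trans (min_le_right _ _) (min_le_left _ _)))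
  have htd4 : t < d4 := lt_of_lt_of_le htε
    (le_trans (min_le_right _ _) (le_trans (min_le_right _ _) (min_le_right _ _)))
  have n3 : θ0 - (t : S1) ≠ s3 := by
    refine sub_ne_of_lt ht0 ht1 ?_
    rw [hd3] at htd3; by_cases h' : θ0 = s3
    · exact Or.inl h'
    · rw [if_neg h'] at htd3; exact Or.inr htd3
  have n4 : θ0 - (t : S1) ≠ s4 := by
    refine sub_ne_of_lt ht0 ht1 ?_
    rw [hd4] at htd4; by_cases h' : θ0 = s4
    · exact Or.inl h'
    · rw [if_neg h'] at htd4; exact Or.inr htd4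
  rw [← h _ n3 n4]
  exact hc t ht0 (lt_of_lt_of_le htε (min_le_left _ _))


/-- a vertical bubble creation move does not change the associated movie
diagram: `Ψ_{P'} = Ψ_P`. -/
theorem bubble_move_moviePsi (P P' : RectDiagram) (r r1 r2 r3 : Rect) (θ3 θ4 : S1)
    (h : IsBubbleMove P P' r r1 r2 r3 θ3 θ4) :
    ∀ θ0 : S1, moviePsi P' θ0 = moviePsi P θ0 := by
  obtain ⟨hr, h3, h4, -, -, ⟨e1a, e1b, e1c, e1d⟩, ⟨e2a, e2b, e2c, e2d⟩,
    ⟨e3a, e3b, e3c, e3d⟩, hP'⟩ := h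
  have key : ∀ θ : S1, θ ≠ θ3 → θ ≠ θ4 → movieAt P' θ = movieAt P θ := by
    intro θ n3 n4
    ext c
    constructor
    · rintro ⟨r', hr', hθ, rfl⟩
      rw [hP'] at hr'
      rcases hr' with h' | h'
      · exact ⟨r', h'.1, hθ, rfl⟩
      · simp only [Set.mem_insert_iff, Set.mem_singleton_iff] at h'
        rcases h' with rfl | rfl | rfl
        · exact ⟨r, hr, by rw [e1a, e1b] at hθ; exact openArc_subL h3 h4 hθ,
            by rw [e1c, e1d]⟩
        · exact ⟨r, hr, by rw [e2a, e2b] at hθ; exact openArc_subM h3 h4 hθ,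
            by rw [e2c, e2d, Set.pair_comm]⟩
        · exact ⟨r, hr, by rw [e3a, e3b] at hθ; exact openArc_subR h3 h4 hθ,
            by rw [e3c, e3d]⟩
    · rintro ⟨r', hr', hθ, rfl⟩
      by_cases hrr : r' = r
      · subst hrr
        rcases openArc_split h3 h4 hθ n3 n4 with h' | h' | h'
        · exact ⟨r1, by rw [hP']; exact Or.inr (by simp),
            by rw [e1a, e1b]; exact h', by rw [e1c, e1d]⟩
        · exact ⟨r2, by rw [hP']; exact Or.inr (by simp),
            by rw [e2a, e2b]; exact h', by rw [e2c, e2d, Set.pair_comm]⟩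
        · exact ⟨r3, by rw [hP']; exact Or.inr (by simp),
            by rw [e3a, e3b]; exact h', by rw [e3c, e3d]⟩
      · exact ⟨r', by rw [hP']; exact Or.inl ⟨hr', hrr⟩, hθ, rfl⟩
  intro θ0
  exact Set.Subset.antisymm (moviePsi_subset_of _ _ θ3 θ4 key θ0)
    (moviePsi_subset_of _ _ θ3 θ4 (fun θ a b => (key θ a b).symm) θ0)

end RectDiag
end
end

section
/- Let Π be a rectangular diagram of a surface and suppose a meridian m_{θ0} contains exactly two vertices of Π and these two vertices are free (belong to ∂Π). Then the event Ψ_Π(θ0) ↦ Ψ_Π(θ0+0) of the associated movie diagram has one of the forms {φ',φ''} ⟿ ∅ or ∅ ⟿ {φ',φ''}: exactly one chord is removed and none added, or exactly one chord is added and none removed. -/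
noncomputable section

namespace RectDiag

/-!
For `t → 0⁺` the rectangles crossing `m_{θ0 ∓ t}` are those crossing `m_{θ0}` together with
those whose right (resp. left) side lies on `m_{θ0}`; so `Ψ_Π(θ0)` and `Ψ_Π(θ0+0)` are the chords
seen at `θ0` plus the chords of these rectangles. A rectangle with a side on `m_{θ0}` has two
vertices there, one of which must be the free vertex `v1`; hence exactly one rectangle `r0` has a
side on `m_{θ0}`. Its chord is not seen at `θ0`, by compatibility, so it is exactly the chord that
appears (if `θ0` is the left end of `r0`) or disappears (if it is the right end).
-/

open Filter Topology Set

lemma arcLen_mem_Ico (x y : S1) : arcLen x y ∈ Ico (0 : ℝ) 1 := by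
  simpa [arcLen] using (AddCircle.equivIco 1 0 (y - x)).2

lemma add_arcLen (x y : S1) : x + (arcLen x y : S1) = y := by
  simp [arcLen]

lemma arcLen_add_self {x : S1} {u : ℝ} (hu : u ∈ Ico (0 : ℝ) 1) : arcLen x (x + u) = u := by
  rw [arcLen, add_sub_cancel_left, AddCircle.equivIco_coe_of_mem (by simpa using hu)]

lemma exists_eq_add_coe (x z : S1) : ∃ u ∈ Ico (0 : ℝ) 1, z = x + u :=
  ⟨arcLen x z, arcLen_mem_Ico x z, (add_arcLen x z).symm⟩

lemma add_coe_inj {x : S1} {u v : ℝ} (hu : u ∈ Ico (0 : ℝ) 1) (hv : v ∈ Ico (0 : ℝ) 1) :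
    x + (u : S1) = x + v ↔ u = v := by
  rw [add_right_inj, AddCircle.coe_eq_coe_iff_of_mem_Ico (a := 0) (by simpa using hu)
    (by simpa using hv)]

lemma add_mem_openArc_add_iff {x : S1} {u v : ℝ} (hu : u ∈ Ico (0 : ℝ) 1)
    (hv : v ∈ Ico (0 : ℝ) 1) : x + (u : S1) ∈ openArc x (x + v) ↔ 0 < u ∧ u < v := by
  rw [openArc, mem_ofPred_eq, arcLen_add_self hv]
  constructor
  · rintro ⟨t, ht0, htv, he⟩
    exact (add_coe_inj hu ⟨ht0.le, htv.trans hv.2⟩).1 he ▸ ⟨ht0, htv⟩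
  · exact fun h => ⟨u, h.1, h.2, rfl⟩

lemma openArc_subset_closedArc (x y : S1) : openArc x y ⊆ closedArc x y :=
  fun _ ⟨t, ht0, htL, he⟩ => ⟨t, ht0.le, htL.le, he⟩

lemma pair_subset_closedArc (x y : S1) : ({x, y} : Set S1) ⊆ closedArc x y := by
  rintro z (rfl | rfl)
  · exact ⟨0, le_rfl, (arcLen_mem_Ico z y).1, by simp⟩
  · exact ⟨arcLen x z, (arcLen_mem_Ico x z).1, le_rfl, (add_arcLen x z).symm⟩

lemma notMem_openArc_of_mem_pair {x y z : S1} (hz : z ∈ ({x, y} : Set S1)) :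
    z ∉ openArc x y := by
  obtain ⟨v, hv, rfl⟩ := exists_eq_add_coe x y
  rcases hz with rfl | rfl
  · simpa using (add_mem_openArc_add_iff (x := z) ⟨le_rfl, one_pos⟩ hv).not.2 (by simp)
  · rw [add_mem_openArc_add_iff hv hv]
    exact fun h => h.2.false

lemma neg_mem_openArc_neg_of_mem {x y z : S1} (hz : z ∈ openArc x y) :
    -z ∈ openArc (-y) (-x) := by
  obtain ⟨t, ht0, htL, rfl⟩ := hz
  have hL : arcLen (-y) (-x) = arcLen x y := by rw [arcLen, arcLen, neg_sub_neg]
  set L := arcLen x y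
  have hy : y = x + L := (add_arcLen x y).symm
  refine ⟨L - t, by linarith, by linarith, ?_⟩
  rw [AddCircle.coe_sub, hy]
  abel

lemma neg_mem_openArc_neg_iff {x y z : S1} : -z ∈ openArc (-y) (-x) ↔ z ∈ openArc x y :=
  ⟨fun h => by simpa using neg_mem_openArc_neg_of_mem h, neg_mem_openArc_neg_of_mem⟩

lemma eventually_sub_mem_openArc_iff {x y : S1} (hxy : x ≠ y) (θ : S1) :
    ∀ᶠ t : ℝ in 𝓝[>] 0, (θ - (t : S1) ∈ openArc x y ↔ θ ∈ openArc x y ∨ θ = y) := by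
  obtain ⟨L, hL, rfl⟩ := exists_eq_add_coe x y
  obtain ⟨s, hs, rfl⟩ := exists_eq_add_coe x θ
  have hL0 : 0 < L := hL.1.lt_of_ne fun h => hxy (by simp [← h])
  have hrhs : x + (s : S1) ∈ openArc x (x + L) ∨ x + (s : S1) = x + L ↔ 0 < s ∧ s ≤ L := by
    rw [add_mem_openArc_add_iff hs hL, add_coe_inj hs hL]
    constructor
    · rintro (⟨h0, hsL⟩ | rfl)
      exacts [⟨h0, hsL.le⟩, ⟨hL0, le_rfl⟩]
    · rintro ⟨h0, hsL⟩
      exact hsL.lt_or_eq.imp (fun h => ⟨h0, h⟩) id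
  simp only [hrhs]
  rcases hs.1.eq_or_lt with rfl | hs0
  · filter_upwards [Ioo_mem_nhdsGT (sub_pos.2 hL.2)] with t ht
    have hmem : 1 - t ∈ Ico (0 : ℝ) 1 := ⟨by linarith [ht.2, hL.1], by linarith [ht.1]⟩
    have he : x + ((0 : ℝ) : S1) - t = x + ((1 - t : ℝ) : S1) := by
      rw [AddCircle.coe_sub, AddCircle.coe_period]; simp [sub_eq_add_neg]
    rw [he, add_mem_openArc_add_iff hmem hL]
    constructor <;> intro h <;> linarith [h.1, h.2, ht.2]
  · have hsub : ∀ t ∈ Ioo 0 s, x + (s : S1) - t ∈ openArc x (x + L) ↔ s - t < L := by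
      intro t ht
      rw [add_sub_assoc, ← AddCircle.coe_sub,
        add_mem_openArc_add_iff ⟨by linarith [ht.2], by linarith [ht.1, hs.2]⟩ hL]
      exact and_iff_right (by linarith [ht.2])
    rcases le_or_gt s L with hsL | hsL
    · filter_upwards [Ioo_mem_nhdsGT hs0] with t ht
      rw [hsub t ht]
      exact iff_of_true (by linarith [ht.1]) ⟨hs0, hsL⟩
    · filter_upwards [Ioo_mem_nhdsGT hs0, Ioo_mem_nhdsGT (sub_pos.2 hsL)] with t ht ht'
      rw [hsub t ht]
      exact iff_of_false (by linarith [ht'.2]) fun h => hsL.not_ge h.2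

lemma eventually_add_mem_openArc_iff {x y : S1} (hxy : x ≠ y) (θ : S1) :
    ∀ᶠ t : ℝ in 𝓝[>] 0, (θ + (t : S1) ∈ openArc x y ↔ θ ∈ openArc x y ∨ θ = x) := by
  filter_upwards [eventually_sub_mem_openArc_iff (neg_injective.ne hxy.symm) (-θ)] with t ht
  rwa [← neg_add', neg_mem_openArc_neg_iff, neg_mem_openArc_neg_iff, neg_inj] at ht

lemma eventually_nhdsGT_zero_iff {p : ℝ → Prop} :
    (∀ᶠ t in 𝓝[>] (0 : ℝ), p t) ↔ ∃ ε > 0, ∀ t, 0 < t → t < ε → p t := by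
  simp only [(nhdsGT_basis (0 : ℝ)).eventually_iff, mem_Ioo, and_imp]

def Rect.chord (r : Rect) : Set S1 := {r.φ1, r.φ2}

lemma Rect.V_subset_toSet (r : Rect) : r.V ⊆ r.toSet :=
  prod_mono (pair_subset_closedArc _ _) (pair_subset_closedArc _ _)

lemma Compatible.mem_V_of_mem_toSet {r1 r2 : Rect} (h : Compatible r1 r2) {v : S1 × S1}
    (hv1 : v ∈ r1.V) (hv2 : v ∈ r2.toSet) : v ∈ r2.V := by
  have hv : v ∈ r1.toSet ∩ r2.toSet := ⟨r1.V_subset_toSet hv1, hv2⟩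
  rcases h with h | ⟨-, h⟩ | ⟨r, h, hdisj⟩
  · exact absurd (h ▸ hv) (notMem_empty v)
  · exact h hv
  · exact absurd (mem_union_left _ hv1) (disjoint_left.1 hdisj (h ▸ hv))

lemma movieAt_eq_image (P : RectDiagram) (θ : S1) :
    movieAt P θ = Rect.chord '' {r ∈ P.rects | θ ∈ openArc r.θ1 r.θ2} := by
  ext c
  simp only [movieAt, Rect.chord, mem_image, mem_ofPred_eq, and_assoc, eq_comm]

lemma eventually_movieAt_eq {l : Filter ℝ} {g : ℝ → S1} {q : Rect → Prop} (P : RectDiagram)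
    (θ : S1) (h : ∀ r ∈ P.rects, ∀ᶠ t in l, (g t ∈ openArc r.θ1 r.θ2 ↔
      θ ∈ openArc r.θ1 r.θ2 ∨ q r)) :
    ∀ᶠ t in l, movieAt P (g t) = movieAt P θ ∪ Rect.chord '' {r ∈ P.rects | q r} := by
  filter_upwards [P.finite.eventually_all.2 h] with t ht
  rw [movieAt_eq_image, movieAt_eq_image, ← image_union, ← sep_or]
  exact congrArg _ (sep_ext_iff.2 ht)

lemma setOf_eventually_mem_of_eventually_eq {α β : Type*} {l : Filter α} [l.NeBot]
    {f : α → Set β} {s : Set β} (h : ∀ᶠ a in l, f a = s) : {b | ∀ᶠ a in l, b ∈ f a} = s := by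
  ext b
  exact (eventually_congr (h.mono fun a ha => by rw [ha])).trans eventually_const

lemma moviePsi_eq (P : RectDiagram) (θ : S1) :
    moviePsi P θ = movieAt P θ ∪ Rect.chord '' {r ∈ P.rects | θ = r.θ2} := by
  simp only [moviePsi, ← eventually_nhdsGT_zero_iff]
  exact setOf_eventually_mem_of_eventually_eq
    (eventually_movieAt_eq P θ fun r _ => eventually_sub_mem_openArc_iff r.hθ θ)

lemma moviePsiRight_eq (P : RectDiagram) (θ : S1) :
    moviePsiRight P θ = movieAt P θ ∪ Rect.chord '' {r ∈ P.rects | θ = r.θ1} := by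
  simp only [moviePsiRight, ← eventually_nhdsGT_zero_iff]
  exact setOf_eventually_mem_of_eventually_eq
    (eventually_movieAt_eq P θ fun r _ => eventually_add_mem_openArc_iff r.hθ θ)

/-- A rectangle crossing `m_θ0` with the same chord as `r0` would contain a vertex of `r0` on
`m_θ0` which is not one of its own vertices, against compatibility. -/
lemma chord_notMem_movieAt {P : RectDiagram} {θ0 : S1} {r0 : Rect} (hr0 : r0 ∈ P.rects)
    (hθ0 : θ0 ∈ ({r0.θ1, r0.θ2} : Set S1)) : r0.chord ∉ movieAt P θ0 := by
  rintro ⟨r, hr, hθr, hchord⟩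
  have hne : r0 ≠ r := by
    rintro rfl
    exact notMem_openArc_of_mem_pair hθ0 hθr
  have hv : (θ0, r0.φ1) ∈ r.toSet :=
    ⟨openArc_subset_closedArc _ _ hθr, pair_subset_closedArc _ _ (hchord ▸ Or.inl rfl)⟩
  exact notMem_openArc_of_mem_pair
    ((P.compat r0 hr0 r hr hne).mem_V_of_mem_toSet ⟨hθ0, Or.inl rfl⟩ hv).1 hθr

lemma mem_V_of_vertices_on_meridian_eq_pair {P : RectDiagram} {θ0 : S1} {v1 v2 : S1 × S1}
    (hset : {v : S1 × S1 | v ∈ P.vertexSet ∧ v.1 = θ0} = {v1, v2}) {r : Rect}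
    (hr : r ∈ P.rects) (hθ : θ0 ∈ ({r.θ1, r.θ2} : Set S1)) : v1 ∈ r.V := by
  have hpair : ∀ φ ∈ ({r.φ1, r.φ2} : Set S1), (θ0, φ) = v1 ∨ (θ0, φ) = v2 := fun φ hφ => by
    have hv : (θ0, φ) ∈ {v : S1 × S1 | v ∈ P.vertexSet ∧ v.1 = θ0} :=
      ⟨mem_biUnion hr ⟨hθ, hφ⟩, rfl⟩
    rwa [hset] at hv
  rcases hpair r.φ1 (Or.inl rfl) with h1 | h1
  · exact h1 ▸ ⟨hθ, Or.inl rfl⟩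
  rcases hpair r.φ2 (Or.inr rfl) with h2 | h2
  · exact h2 ▸ ⟨hθ, Or.inr rfl⟩
  exact absurd (congrArg Prod.snd (h1.trans h2.symm)) r.hφ

lemma existsUnique_rect_side_on_meridian {P : RectDiagram} {θ0 : S1} {v1 v2 : S1 × S1}
    (hset : {v : S1 × S1 | v ∈ P.vertexSet ∧ v.1 = θ0} = {v1, v2})
    (hfree : FreeVertexOf P.rects v1) :
    ∃! r0, r0 ∈ P.rects ∧ θ0 ∈ ({r0.θ1, r0.θ2} : Set S1) := by
  have hv1 : v1 ∈ {v : S1 × S1 | v ∈ P.vertexSet ∧ v.1 = θ0} := hset ▸ Or.inl rfl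
  obtain ⟨r0, hr0, hv1r0⟩ := mem_iUnion₂.1 hv1.1
  refine ⟨r0, ⟨hr0, hv1.2 ▸ hv1r0.1⟩, fun r ⟨hr, hθ⟩ => ?_⟩
  exact hfree.unique ⟨hr, mem_V_of_vertices_on_meridian_eq_pair hset hr hθ⟩ ⟨hr0, hv1r0⟩

/-- if a meridian `m_{θ0}` contains exactly two vertices of `P`, both
free, then the event of the movie diagram at `θ0` removes exactly one chord and adds
none, or adds exactly one chord and removes none. -/
theorem two_free_vertices_event (P : RectDiagram) (θ0 : S1)
    (h : ∃ v1 v2 : S1 × S1, v1 ≠ v2 ∧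
      {v : S1 × S1 | v ∈ P.vertexSet ∧ v.1 = θ0} = {v1, v2} ∧
      FreeVertexOf P.rects v1 ∧ FreeVertexOf P.rects v2) :
    (∃ c ∈ moviePsi P θ0, moviePsiRight P θ0 = moviePsi P θ0 \ {c}) ∨
    (∃ c : Set S1, c ∉ moviePsi P θ0 ∧ moviePsiRight P θ0 = moviePsi P θ0 ∪ {c}) := by
  obtain ⟨v1, v2, -, hset, hfree, -⟩ := h
  obtain ⟨r0, ⟨hr0, hθ0⟩, huniq⟩ := existsUnique_rect_side_on_meridian hset hfree
  have hc0 : r0.chord ∉ movieAt P θ0 := chord_notMem_movieAt hr0 hθ0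
  rw [moviePsi_eq, moviePsiRight_eq]
  rcases hθ0 with rfl | rfl
  · have hend : {r ∈ P.rects | r0.θ1 = r.θ2} = ∅ :=
      eq_empty_iff_forall_notMem.2 fun r ⟨hr, h⟩ => by
        obtain rfl := huniq r ⟨hr, Or.inr h⟩; exact Rect.hθ _ h
    have hstart : {r ∈ P.rects | r0.θ1 = r.θ1} = {r0} :=
      eq_singleton_iff_unique_mem.2 ⟨⟨hr0, rfl⟩, fun r ⟨hr, h⟩ => huniq r ⟨hr, Or.inl h⟩⟩
    rw [hend, hstart, image_empty, union_empty, image_singleton]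
    exact Or.inr ⟨_, hc0, rfl⟩
  · have hstart : {r ∈ P.rects | r0.θ2 = r.θ1} = ∅ :=
      eq_empty_iff_forall_notMem.2 fun r ⟨hr, h⟩ => by
        obtain rfl := huniq r ⟨hr, Or.inl h⟩; exact Rect.hθ _ h.symm
    have hend : {r ∈ P.rects | r0.θ2 = r.θ2} = {r0} :=
      eq_singleton_iff_unique_mem.2 ⟨⟨hr0, rfl⟩, fun r ⟨hr, h⟩ => huniq r ⟨hr, Or.inr h⟩⟩
    rw [hend, hstart, image_empty, union_empty, image_singleton]
    exact Or.inl ⟨_, mem_union_right _ rfl, by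
      rw [union_singleton, insert_sdiff_self_of_notMem hc0]⟩

end RectDiag
end
end
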